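/- Assume Ŷ and Ẑ are linearly independent. Then q₁ = (‖Ŷ‖Ẑ + ‖Ẑ‖Ŷ)/‖‖Ŷ‖Ẑ + ‖Ẑ‖Ŷ‖ is a unit vector and is an eigenvector of A with eigenvalue s₁ = ⟨y, z⟩ − (‖Ŷ‖‖Ẑ‖ + ⟨Ŷ, Ẑ⟩)/2, i.e., A q₁ = s₁ q₁. -/

import Mathlib

open Matrix

/-- The Euclidean norm of a vector in `Fin n → ℝ`. -/
noncomputable def euclNorm {n : ℕ} (v : Fin n → ℝ) : ℝ := Real.sqrt (v ⬝ᵥ v)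

lemma euclNorm_sq {n : ℕ} (v : Fin n → ℝ) : euclNorm v ^ 2 = v ⬝ᵥ v := by
  unfold euclNorm
  exact Real.sq_sqrt (Finset.sum_nonneg fun i _ => mul_self_nonneg _)

lemma euclNorm_nonneg {n : ℕ} (v : Fin n → ℝ) : 0 ≤ euclNorm v := Real.sqrt_nonneg _

lemma euclNorm_eq_zero {n : ℕ} {v : Fin n → ℝ} (h : euclNorm v = 0) : v = 0 := by
  have hv : v ⬝ᵥ v = 0 := by
    have := euclNorm_sq v
    rw [h] at this; simpa using this.symm
  exact (dotProduct_self_eq_zero).1 hv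

lemma vecMulVec_mulVec' {K : ℕ} (v w x : Fin K → ℝ) :
    (vecMulVec v w).mulVec x = (w ⬝ᵥ x) • v := by
  ext i
  simp [Matrix.mulVec, vecMulVec, dotProduct, Finset.mul_sum, mul_comm, mul_assoc,
    mul_left_comm]

/-- If `Ŷ = Xᵀy` and `Ẑ = Xᵀz` are linearly independent, then
`q₁ = (‖Ŷ‖Ẑ + ‖Ẑ‖Ŷ)/‖‖Ŷ‖Ẑ + ‖Ẑ‖Ŷ‖` is a unit eigenvector of
`A = ⟨y,z⟩ I − (ŶẐᵀ + ẐŶᵀ)/2` with eigenvalue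
`s₁ = ⟨y,z⟩ − (‖Ŷ‖‖Ẑ‖ + ⟨Ŷ,Ẑ⟩)/2`. -/
theorem q1_is_unit_eigenvector
    (N K : ℕ) (hN : 0 < N) (hK : 0 < K)
    (y z : Fin N → ℝ) (X : Matrix (Fin N) (Fin K) ℝ)
    (hX : Xᵀ * X = 1)
    (Yh Zh : Fin K → ℝ) (hYh : Yh = Xᵀ.mulVec y) (hZh : Zh = Xᵀ.mulVec z)
    (A : Matrix (Fin K) (Fin K) ℝ)
    (hA : A = (y ⬝ᵥ z) • (1 : Matrix (Fin K) (Fin K) ℝ) -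
        (2⁻¹ : ℝ) • (vecMulVec Yh Zh + vecMulVec Zh Yh))
    (hli : LinearIndependent ℝ ![Yh, Zh])
    (q1 : Fin K → ℝ)
    (hq1 : q1 = (euclNorm (euclNorm Yh • Zh + euclNorm Zh • Yh))⁻¹ •
        (euclNorm Yh • Zh + euclNorm Zh • Yh))
    (s1 : ℝ)
    (hs1 : s1 = y ⬝ᵥ z - (euclNorm Yh * euclNorm Zh + Yh ⬝ᵥ Zh) / 2) :
    euclNorm q1 = 1 ∧ A.mulVec q1 = s1 • q1 := by
  set a := euclNorm Yh with ha
  set b := euclNorm Zh with hb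
  set c := Yh ⬝ᵥ Zh with hc
  set w : Fin K → ℝ := a • Zh + b • Yh with hw
  -- nonvanishing
  have hYne : Yh ≠ 0 := by
    have := hli.ne_zero 0; simpa using this
  have hZne : Zh ≠ 0 := by
    have := hli.ne_zero 1; simpa using this
  have hane : a ≠ 0 := fun h => hYne (euclNorm_eq_zero h)
  have hbne : b ≠ 0 := fun h => hZne (euclNorm_eq_zero h)
  have hwne : w ≠ 0 := by
    intro h
    rw [linearIndependent_fin2] at hli
    refine hli.2 (-(a / b)) ?_
    have : a • Zh = -(b • Yh) := by
      rw [eq_neg_iff_add_eq_zero]; exact h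
    funext i
    have h1 : a * Zh i = -(b * Yh i) := congrFun this i
    have : Zh i = -(b / a) * Yh i := by
      field_simp at h1 ⊢; linarith
    simp [this]
    field_simp
  -- dot product facts
  have hYY : Yh ⬝ᵥ Yh = a ^ 2 := (euclNorm_sq Yh).symm
  have hZZ : Zh ⬝ᵥ Zh = b ^ 2 := (euclNorm_sq Zh).symm
  have hww : w ⬝ᵥ w = (euclNorm w) ^ 2 := (euclNorm_sq w).symm
  have hwwpos : 0 < w ⬝ᵥ w := by
    rcases lt_or_eq_of_le (Finset.sum_nonneg fun i _ => mul_self_nonneg (w i) :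
        (0:ℝ) ≤ w ⬝ᵥ w) with h | h
    · exact h
    · exact absurd ((dotProduct_self_eq_zero).1 h.symm) hwne
  set nw := euclNorm w with hnw
  have hnwpos : 0 < nw := by
    have := hww; nlinarith [euclNorm_nonneg w]
  -- unit norm
  have hq1w : q1 = nw⁻¹ • w := hq1
  have hunit : euclNorm q1 = 1 := by
    have : q1 ⬝ᵥ q1 = 1 := by
      rw [hq1w]
      rw [smul_dotProduct, dotProduct_smul, hww]
      field_simp
      simp only [smul_eq_mul, one_div]
      rw [← mul_assoc, ← sq, ← mul_pow, inv_mul_cancel₀ hnwpos.ne', one_pow]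
    unfold euclNorm
    rw [this, Real.sqrt_one]
  refine ⟨hunit, ?_⟩
  -- eigenvector equation for w
  have hZw : Zh ⬝ᵥ w = b * (a * b + c) := by
    rw [hw, dotProduct_add, dotProduct_smul, dotProduct_smul, hZZ,
      dotProduct_comm Zh Yh, ← hc]
    simp only [smul_eq_mul]; ring
  have hYw : Yh ⬝ᵥ w = a * (a * b + c) := by
    rw [hw, dotProduct_add, dotProduct_smul, dotProduct_smul, hYY, ← hc]
    simp only [smul_eq_mul]; ring
  have hAw : A.mulVec w = s1 • w := by
    rw [hA, Matrix.sub_mulVec, Matrix.smul_mulVec, Matrix.one_mulVec,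
      Matrix.smul_mulVec, Matrix.add_mulVec, vecMulVec_mulVec', vecMulVec_mulVec',
      hZw, hYw]
    funext i
    simp only [Pi.sub_apply, Pi.add_apply, Pi.smul_apply, smul_eq_mul, hw, hs1, ← ha, ← hb, ← hc]
    ring
  rw [hq1w, Matrix.mulVec_smul, hAw, smul_comm]
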